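/- Let θ ∈ (0,1], a ∈ (0,1), b > 0 with a + b > 1, and set μ = a^{−1/θ} > 1, α = (1−a)/(a+b−1), β = b/(a+b−1) (so β − α = 1). Define φ(z) = 1 − (a(1−z)^{−θ} + b)^{−1/θ} and φ_W(λ) = 1 − λ α^{1/θ}(β λ^{θ} + 1)^{−1/θ} for λ > 0. Then the Poincaré functional equation φ_W(μλ) = φ(φ_W(λ)) holds for all λ > 0. -/

import Mathlib

/-!
In the coordinate `u = (1 - z) ^ (-θ)` the generating function `φ` acts affinely, `u ↦ a * u + b`,
while `φW λ` has coordinate `(β * s + 1) / (α * s)` with `s = λ ^ θ`. Replacing `λ` by `μ * λ`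
replaces `s` by `s / a`, and the identity `a * β + b * α = β` turns this into the affine map.
-/

open Real

lemma rpow_neg_one_div_rpow_neg {θ u : ℝ} (hθ : θ ≠ 0) (hu : 0 ≤ u) :
    (u ^ (-1 / θ)) ^ (-θ) = u := by
  rw [← rpow_mul hu, neg_div, neg_mul_neg, one_div_mul_cancel hθ, rpow_one]

lemma mul_rpow_one_div_mul_rpow_neg_one_div {θ x y z : ℝ} (hθ : θ ≠ 0) (hx : 0 ≤ x)
    (hy : 0 ≤ y) (hz : 0 ≤ z) :
    x * y ^ (1 / θ) * z ^ (-1 / θ) = (z / (y * x ^ θ)) ^ (-1 / θ) := by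
  rw [div_rpow hz (by positivity), mul_rpow hy (by positivity), ← rpow_mul hx,
    mul_div_cancel₀ _ hθ, rpow_neg_one, neg_div, rpow_neg hy, rpow_neg hz]
  field_simp

lemma affine_comp_linearFractional_eq {a b α β s : ℝ} (ha : a ≠ 0) (hα : α ≠ 0) (hs : s ≠ 0)
    (h : a * β + b * α = β) :
    a * ((β * s + 1) / (α * s)) + b = (β * (s / a) + 1) / (α * (s / a)) := by
  field_simp
  linear_combination s * h

theorem poincare_equation_general
    (θ a b : ℝ) (hθ : 0 < θ) (ha0 : 0 < a) (ha1 : a < 1)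
    (hab : 1 < a + b) :
    let μ : ℝ := a ^ (-1 / θ)
    let α : ℝ := (1 - a) / (a + b - 1)
    let β : ℝ := b / (a + b - 1)
    let φ : ℝ → ℝ := fun z => 1 - (a * (1 - z) ^ (-θ) + b) ^ (-1 / θ)
    let φW : ℝ → ℝ := fun lam => 1 - lam * α ^ (1 / θ) * (β * lam ^ θ + 1) ^ (-1 / θ)
    ∀ lam : ℝ, 0 < lam → φW (μ * lam) = φ (φW lam) := by
  intro μ α β φ φW lam hlam
  have hd : 0 < a + b - 1 := by linarith
  have hα : 0 < α := div_pos (by linarith) hd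
  have hβ : 0 < β := div_pos (by linarith) hd
  have hαβ : a * β + b * α = β := by
    simp only [α, β]
    field_simp
    ring
  have hφW : ∀ l > 0, φW l = 1 - ((β * l ^ θ + 1) / (α * l ^ θ)) ^ (-1 / θ) := fun l hl => by
    simp only [φW]
    rw [mul_rpow_one_div_mul_rpow_neg_one_div hθ.ne' hl.le hα.le (by positivity)]
  have hμ : (μ * lam) ^ θ = lam ^ θ / a := by
    rw [mul_rpow (by positivity) hlam.le, ← rpow_mul ha0.le, div_mul_cancel₀ _ hθ.ne',
      rpow_neg_one, inv_mul_eq_div]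
  have hs : 0 < lam ^ θ := by positivity
  simp only [φ]
  rw [hφW _ (by positivity), hφW _ hlam, sub_sub_cancel,
    rpow_neg_one_div_rpow_neg hθ.ne' (by positivity),
    affine_comp_linearFractional_eq ha0.ne' hα.ne' hs.ne' hαβ, hμ]

theorem poincare_equation
    (θ a b : ℝ) (hθ : 0 < θ) (hθ1 : θ ≤ 1) (ha0 : 0 < a) (ha1 : a < 1)
    (hb : 0 < b) (hab : 1 < a + b) :
    let μ : ℝ := a ^ (-1 / θ)
    let α : ℝ := (1 - a) / (a + b - 1)
    let β : ℝ := b / (a + b - 1)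
    let φ : ℝ → ℝ := fun z => 1 - (a * (1 - z) ^ (-θ) + b) ^ (-1 / θ)
    let φW : ℝ → ℝ := fun lam => 1 - lam * α ^ (1 / θ) * (β * lam ^ θ + 1) ^ (-1 / θ)
    ∀ lam : ℝ, 0 < lam → φW (μ * lam) = φ (φW lam) :=
  poincare_equation_general θ a b hθ ha0 ha1 hab
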